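/- The domination relation ≺ amongst equivalence classes of regular wiretap sets (under the equivalence ∼ of sharing a common minimum cut from s) is a strict partial order: it is irreflexive and transitive. -/

import Mathlib

open Finset

/-- Consecutive edges in the list match head-to-tail. -/
def EChain {V E : Type*} (tl hd : E → V) (p : List E) : Prop :=
  p.Chain' (fun d e => hd d = tl e)

/-- A (nonempty) directed path of edges starting at node `s`. -/
def PathFrom {V E : Type*} (tl hd : E → V) (s : V) (p : List E) : Prop :=
  p ≠ [] ∧ EChain tl hd p ∧ ∀ e ∈ p.head?, tl e = s

/-- The directed graph is acyclic: no nonempty edge-chain returns to its start. -/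
def Acyclic {V E : Type*} (tl hd : E → V) : Prop :=
  ∀ p : List E, p ≠ [] → EChain tl hd p →
    ∀ d ∈ p.head?, ∀ e ∈ p.getLast?, hd e ≠ tl d

/-- `B` separates the edge set `A` from `s`: every directed path from `s`
ending with an edge of `A` passes through an edge of `B` (i.e. `B` is a cut
between `s` and `A`). -/
def Separates {V E : Type*} (tl hd : E → V) (s : V) (A B : Finset E) : Prop :=
  ∀ p : List E, PathFrom tl hd s p → (∃ e ∈ p.getLast?, e ∈ A) → ∃ b ∈ B, b ∈ p

/-- The minimum cut capacity between `s` and the edge set `A`. -/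
noncomputable def mincut {V E : Type*} [Fintype E] (tl hd : E → V) (s : V)
    (A : Finset E) : ℕ :=
  sInf {n | ∃ B : Finset E, Separates tl hd s A B ∧ B.card = n}

/-- `B` is a minimum cut between `s` and the edge set `A`. -/
def IsMinCut {V E : Type*} [Fintype E] (tl hd : E → V) (s : V) (A B : Finset E) : Prop :=
  Separates tl hd s A B ∧ B.card = mincut tl hd s A

/-- An edge set is regular if its cardinality equals its minimum cut capacity from `s`. -/
def Regular {V E : Type*} [Fintype E] (tl hd : E → V) (s : V) (A : Finset E) : Prop :=
  A.card = mincut tl hd s A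

/-- `A ∼ A'`: the two edge sets have a common minimum cut from `s`. -/
def EquivSets {V E : Type*} [Fintype E] (tl hd : E → V) (s : V) (A A' : Finset E) : Prop :=
  ∃ C : Finset E, IsMinCut tl hd s A C ∧ IsMinCut tl hd s A' C

/-- `A₁ ≺ A₂`: `|A₁| < |A₂|` and some minimum cut between `s` and `A₂`
also separates `A₁` from `s`. -/
def Dominates {V E : Type*} [Fintype E] (tl hd : E → V) (s : V) (A₁ A₂ : Finset E) : Prop :=
  A₁.card < A₂.card ∧
    ∃ C : Finset E, IsMinCut tl hd s A₂ C ∧ Separates tl hd s A₁ C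

/-- A directed path of edges from node `s` to node `t`. -/
def NPathFromTo {V E : Type*} (tl hd : E → V) (s t : V) (p : List E) : Prop :=
  PathFrom tl hd s p ∧ ∀ e ∈ p.getLast?, hd e = t

/-- `B` is a cut between the nodes `s` and `t`. -/
def NSeparates {V E : Type*} (tl hd : E → V) (s t : V) (B : Finset E) : Prop :=
  ∀ p : List E, NPathFromTo tl hd s t p → ∃ b ∈ B, b ∈ p

/-- The minimum cut capacity between the nodes `s` and `t`. -/
noncomputable def nmincut {V E : Type*} [Fintype E] (tl hd : E → V) (s t : V) : ℕ :=
  sInf {n | ∃ B : Finset E, NSeparates tl hd s t B ∧ B.card = n}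

/-- `B` is a minimum cut between the nodes `s` and `t`. -/
def IsNodeMinCut {V E : Type*} [Fintype E] (tl hd : E → V) (s t : V) (B : Finset E) : Prop :=
  NSeparates tl hd s t B ∧ B.card = nmincut tl hd s t

/-- `d ≤ e` for edges: there is a directed path starting with `d` and ending with `e`
(in particular `d ≤ d`). -/
def EdgeLe {V E : Type*} (tl hd : E → V) (d e : E) : Prop :=
  ∃ p : List E, EChain tl hd p ∧ p.head? = some d ∧ p.getLast? = some e

/-- A family of pairwise edge-disjoint paths. -/
def EdgeDisjoint {E : Type*} {n : ℕ} (P : Fin n → List E) : Prop :=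
  ∀ i j, i ≠ j → List.Disjoint (P i) (P j)

/-- The primary minimum cut between nodes `s` and `t`: a minimum cut separating
every minimum cut between `s` and `t` from `s`. -/
def IsPrimaryNodeMinCut {V E : Type*} [Fintype E] (tl hd : E → V) (s t : V)
    (C : Finset E) : Prop :=
  IsNodeMinCut tl hd s t C ∧
    ∀ C' : Finset E, IsNodeMinCut tl hd s t C' → Separates tl hd s C' C

/-- The primary minimum cut between `s` and an edge set `A`. -/
def IsPrimaryMinCut {V E : Type*} [Fintype E] (tl hd : E → V) (s : V)
    (A C : Finset E) : Prop :=
  IsMinCut tl hd s A C ∧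
    ∀ C' : Finset E, IsMinCut tl hd s A C' → Separates tl hd s C' C

/-- The equivalence class (within the collection `𝒜`) of the wiretap set `A`
under the relation `∼`. -/
def ClassOf {V E : Type*} [Fintype E] (tl hd : E → V) (s : V)
    (𝒜 : Finset (Finset E)) (A : Finset E) : Set (Finset E) :=
  {A' | A' ∈ 𝒜 ∧ EquivSets tl hd s A A'}

/-- Domination amongst (distinct) equivalence classes: some common minimum cut of all
the sets in `C₂` separates every set in `C₁` from `s`. -/
def ClDominates {V E : Type*} [Fintype E] (tl hd : E → V) (s : V)
    (C₁ C₂ : Set (Finset E)) : Prop :=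
  C₁ ≠ C₂ ∧ ∃ CUT : Finset E,
    (∀ A ∈ C₂, IsMinCut tl hd s A CUT) ∧ (∀ A ∈ C₁, Separates tl hd s A CUT)

/-! The proof is the submodularity of cuts. If `P` and `Q` both separate `A` from `s`, let `M`
be the edges of `P ∪ Q` met first, and `J` the edges met last, on paths from `s` into `P ∪ Q`
(resp. into `A`). Both separate `A`, and an edge in `M ∩ J` lies on a path that meets `P ∪ Q`
only there, so it lies in `P ∩ Q`; hence `|M| + |J| ≤ |P| + |Q|`. When `P` is a minimum cut of
`A` this gives a cut `M`, separating both `P` and `Q` from `s`, with `|M| ≤ |Q|`. Applied to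
two common minimum cuts this makes `∼` transitive, and applied to the cuts witnessing
`Cl₁ ≺ Cl₂ ≺ Cl₃` it yields the cut witnessing `Cl₁ ≺ Cl₃`; and `Cl₁ ≠ Cl₃` because the
minimum cut capacity strictly increases along `≺`: with equal capacities the cut witnessing
`Cl₁ ≺ Cl₂` would be a common minimum cut of the two classes. -/

open scoped Classical

section Lists

variable {α : Type*}

lemma List.exists_eq_append_cons_of_first {p : α → Prop} {l : List α} (h : ∃ x ∈ l, p x) :
    ∃ l₁ e l₂, l = l₁ ++ e :: l₂ ∧ p e ∧ ∀ x ∈ l₁, ¬ p x := by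
  obtain ⟨e, he⟩ := Option.isSome_iff_exists.mp
    (List.find?_isSome.mpr (by simpa using h) : (l.find? (p ·)).isSome)
  obtain ⟨hpe, l₁, l₂, rfl, hl₁⟩ := List.find?_eq_some_iff_append.mp he
  exact ⟨l₁, e, l₂, rfl, by simpa using hpe, by simpa using hl₁⟩

lemma List.exists_eq_append_cons_of_last {p : α → Prop} {l : List α} (h : ∃ x ∈ l, p x) :
    ∃ l₁ e l₂, l = l₁ ++ e :: l₂ ∧ p e ∧ ∀ x ∈ l₂, ¬ p x := by
  obtain ⟨l₁, e, l₂, hl, hpe, hl₁⟩ :=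
    List.exists_eq_append_cons_of_first (l := l.reverse) (by simpa using h)
  refine ⟨l₂.reverse, e, l₁.reverse, ?_, hpe, by simpa using hl₁⟩
  simpa using congrArg List.reverse hl

end Lists

section Paths

variable {V E : Type*} {tl hd : E → V} {s : V}

lemma PathFrom.prefix {p₁ p₂ : List E} {e : E} (hp : PathFrom tl hd s (p₁ ++ e :: p₂)) :
    PathFrom tl hd s (p₁ ++ [e]) := by
  obtain ⟨-, hch, hhead⟩ := hp
  rw [← List.singleton_append, ← List.append_assoc] at hch hhead
  refine ⟨by simp, List.IsChain.left_of_append hch, fun x hx => hhead x ?_⟩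
  rwa [List.head?_append_of_ne_nil _ (by simp)]

lemma PathFrom.splice {p₁ q₁ q₂ : List E} {e : E} (hp : PathFrom tl hd s (p₁ ++ [e]))
    (hq : PathFrom tl hd s (q₁ ++ e :: q₂)) : PathFrom tl hd s (p₁ ++ e :: q₂) := by
  obtain ⟨-, hpch, hphead⟩ := hp
  have hqch : EChain tl hd ([e] ++ q₂) := List.IsChain.right_of_append hq.2.1
  have hch : EChain tl hd (p₁ ++ [e] ++ q₂) := List.IsChain.append_overlap hpch hqch (by simp)
  refine ⟨by simp, by simpa only [List.append_assoc, List.singleton_append] using hch, ?_⟩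
  intro x hx
  exact hphead x (by simpa [List.head?_append] using hx)

lemma separates_of_subset {A S : Finset E} (h : A ⊆ S) : Separates tl hd s A S := by
  rintro p - ⟨e, he, heA⟩
  exact ⟨e, h heA, List.mem_of_mem_getLast? he⟩

lemma Separates.trans {A B C : Finset E} (hAB : Separates tl hd s A B)
    (hBC : Separates tl hd s B C) : Separates tl hd s A C := by
  intro p hp hA
  obtain ⟨b, hbB, hbp⟩ := hAB p hp hA
  obtain ⟨p₁, p₂, rfl⟩ := List.append_of_mem hbp
  obtain ⟨c, hcC, hcp⟩ := hBC (p₁ ++ [b]) hp.prefix ⟨b, by simp, hbB⟩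
  exact ⟨c, hcC, by simp only [List.mem_append, List.mem_singleton] at hcp; grind⟩

noncomputable def firstHits (tl hd : E → V) (s : V) (S : Finset E) : Finset E :=
  S.filter fun e => ∃ p₁ : List E, PathFrom tl hd s (p₁ ++ [e]) ∧ ∀ x ∈ p₁, x ∉ S

noncomputable def lastHits (tl hd : E → V) (s : V) (S A : Finset E) : Finset E :=
  S.filter fun e => ∃ p₁ p₂ : List E, PathFrom tl hd s (p₁ ++ e :: p₂) ∧
    (∃ a ∈ (p₁ ++ e :: p₂).getLast?, a ∈ A) ∧ ∀ x ∈ p₂, x ∉ S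

lemma Separates.firstHits {A S : Finset E} (h : Separates tl hd s A S) :
    Separates tl hd s A (firstHits tl hd s S) := by
  intro p hp hA
  obtain ⟨x, hxS, hxp⟩ := h p hp hA
  obtain ⟨p₁, e, p₂, rfl, heS, hp₁⟩ := List.exists_eq_append_cons_of_first ⟨x, hxp, hxS⟩
  exact ⟨e, Finset.mem_filter.mpr ⟨heS, p₁, hp.prefix, hp₁⟩, by simp⟩

lemma Separates.lastHits {A S : Finset E} (h : Separates tl hd s A S) :
    Separates tl hd s A (lastHits tl hd s S A) := by
  intro p hp hA
  obtain ⟨x, hxS, hxp⟩ := h p hp hA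
  obtain ⟨p₁, e, p₂, rfl, heS, hp₂⟩ := List.exists_eq_append_cons_of_last ⟨x, hxp, hxS⟩
  exact ⟨e, Finset.mem_filter.mpr ⟨heS, p₁, p₂, hp, hA, hp₂⟩, by simp⟩

lemma firstHits_inter_lastHits_subset {A P Q : Finset E} (hP : Separates tl hd s A P)
    (hQ : Separates tl hd s A Q) :
    firstHits tl hd s (P ∪ Q) ∩ lastHits tl hd s (P ∪ Q) A ⊆ P ∩ Q := by
  intro e he
  obtain ⟨hfirst, hlast⟩ := Finset.mem_inter.mp he
  obtain ⟨-, p₁, hp, hp₁⟩ := Finset.mem_filter.mp hfirst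
  obtain ⟨-, q₁, q₂, hq, ⟨a, ha, haA⟩, hq₂⟩ := Finset.mem_filter.mp hlast
  have hpath := hp.splice hq
  have hend : ∃ a ∈ (p₁ ++ e :: q₂).getLast?, a ∈ A :=
    ⟨a, by rwa [List.getLast?_append_cons] at ha ⊢, haA⟩
  have mem_of_separates : ∀ X ⊆ P ∪ Q, Separates tl hd s A X → e ∈ X := by
    intro X hXPQ hX
    obtain ⟨b, hbX, hb⟩ := hX _ hpath hend
    have hbPQ := hXPQ hbX
    simp only [List.mem_append, List.mem_cons] at hb
    rcases hb with hb | rfl | hb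
    · exact absurd hbPQ (hp₁ b hb)
    · exact hbX
    · exact absurd hbPQ (hq₂ b hb)
  exact Finset.mem_inter.mpr ⟨mem_of_separates P Finset.subset_union_left hP,
    mem_of_separates Q Finset.subset_union_right hQ⟩

lemma card_firstHits_add_card_lastHits_le {A P Q : Finset E} (hP : Separates tl hd s A P)
    (hQ : Separates tl hd s A Q) :
    #(firstHits tl hd s (P ∪ Q)) + #(lastHits tl hd s (P ∪ Q) A) ≤ #P + #Q := by
  calc #(firstHits tl hd s (P ∪ Q)) + #(lastHits tl hd s (P ∪ Q) A)
      = #(firstHits tl hd s (P ∪ Q) ∪ lastHits tl hd s (P ∪ Q) A)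
        + #(firstHits tl hd s (P ∪ Q) ∩ lastHits tl hd s (P ∪ Q) A) :=
        (Finset.card_union_add_card_inter _ _).symm
    _ ≤ #(P ∪ Q) + #(P ∩ Q) := add_le_add
        (card_le_card (union_subset (filter_subset _ _) (filter_subset _ _)))
        (card_le_card (firstHits_inter_lastHits_subset hP hQ))
    _ = #P + #Q := Finset.card_union_add_card_inter P Q

end Paths

section MinCuts

variable {V E : Type*} [Fintype E] {tl hd : E → V} {s : V}

lemma mincut_le_card {A B : Finset E} (h : Separates tl hd s A B) : mincut tl hd s A ≤ #B :=
  Nat.sInf_le ⟨B, h, rfl⟩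

lemma exists_isMinCut (A : Finset E) : ∃ B, IsMinCut tl hd s A B := by
  have huniv : Separates tl hd s A Finset.univ := separates_of_subset (Finset.subset_univ A)
  obtain ⟨B, hB, hcard⟩ := Nat.sInf_mem (s := {n | ∃ B : Finset E,
    Separates tl hd s A B ∧ #B = n}) ⟨_, Finset.univ, huniv, rfl⟩
  exact ⟨B, hB, hcard⟩

lemma IsMinCut.of_separates {A C M : Finset E} (hC : IsMinCut tl hd s A C)
    (hM : Separates tl hd s C M) (hcard : #M ≤ #C) : IsMinCut tl hd s A M := by
  have hAM := hC.1.trans hM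
  exact ⟨hAM, le_antisymm (hC.2 ▸ hcard) (mincut_le_card hAM)⟩

lemma IsMinCut.exists_separates_card_le {A P Q : Finset E} (hP : IsMinCut tl hd s A P)
    (hQ : Separates tl hd s A Q) :
    ∃ M, Separates tl hd s P M ∧ Separates tl hd s Q M ∧ #M ≤ #Q := by
  have hPQ : Separates tl hd s A (P ∪ Q) := hP.1.trans (separates_of_subset subset_union_left)
  have hsub := card_firstHits_add_card_lastHits_le hP.1 hQ
  have hlast := mincut_le_card hPQ.lastHits
  refine ⟨firstHits tl hd s (P ∪ Q), (separates_of_subset subset_union_left).firstHits,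
    (separates_of_subset subset_union_right).firstHits, ?_⟩
  rw [hP.2] at hsub
  omega

lemma equivSets_refl (A : Finset E) : EquivSets tl hd s A A :=
  (exists_isMinCut A).imp fun _ hB => ⟨hB, hB⟩

lemma EquivSets.symm {A B : Finset E} (h : EquivSets tl hd s A B) : EquivSets tl hd s B A :=
  h.imp fun _ hC => hC.symm

lemma EquivSets.trans {A B D : Finset E} (hAB : EquivSets tl hd s A B)
    (hBD : EquivSets tl hd s B D) : EquivSets tl hd s A D := by
  obtain ⟨C₁, hC₁A, hC₁B⟩ := hAB
  obtain ⟨C₂, hC₂B, hC₂D⟩ := hBD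
  obtain ⟨M, hC₁M, hC₂M, hcard⟩ := hC₁B.exists_separates_card_le hC₂B.1
  have hC₁C₂ : #C₁ = #C₂ := hC₁B.2.trans hC₂B.2.symm
  exact ⟨M, hC₁A.of_separates hC₁M (hC₁C₂ ▸ hcard), hC₂D.of_separates hC₂M hcard⟩

lemma EquivSets.mincut_eq {A B : Finset E} (h : EquivSets tl hd s A B) :
    mincut tl hd s A = mincut tl hd s B := by
  obtain ⟨C, hA, hB⟩ := h
  rw [← hA.2, hB.2]

lemma mem_classOf_self {𝒜 : Finset (Finset E)} {A : Finset E} (hA : A ∈ 𝒜) :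
    A ∈ ClassOf tl hd s 𝒜 A :=
  ⟨hA, equivSets_refl A⟩

lemma classOf_eq_of_equivSets {𝒜 : Finset (Finset E)} {A B : Finset E}
    (h : EquivSets tl hd s A B) : ClassOf tl hd s 𝒜 A = ClassOf tl hd s 𝒜 B := by
  ext X
  exact and_congr_right fun _ => ⟨h.symm.trans, h.trans⟩

lemma ClDominates.mincut_lt {𝒜 : Finset (Finset E)} {A₁ A₂ : Finset E} (hA₁ : A₁ ∈ 𝒜)
    (hA₂ : A₂ ∈ 𝒜) (h : ClDominates tl hd s (ClassOf tl hd s 𝒜 A₁) (ClassOf tl hd s 𝒜 A₂)) :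
    mincut tl hd s A₁ < mincut tl hd s A₂ := by
  obtain ⟨hne, B, hBmin, hBsep⟩ := h
  have hB₂ := hBmin A₂ (mem_classOf_self hA₂)
  have hB₁ := hBsep A₁ (mem_classOf_self hA₁)
  refine lt_of_le_of_ne (hB₂.2 ▸ mincut_le_card hB₁) fun heq => hne ?_
  exact classOf_eq_of_equivSets ⟨B, ⟨hB₁, hB₂.2.trans heq.symm⟩, hB₂⟩

end MinCuts

theorem clDominates_strictPartialOrder_general {V E : Type*} [Fintype E]
    (tl hd : E → V) (s : V)
    (𝒜 : Finset (Finset E)) :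
    (∀ A ∈ 𝒜, ¬ ClDominates tl hd s (ClassOf tl hd s 𝒜 A) (ClassOf tl hd s 𝒜 A)) ∧
    (∀ A₁ ∈ 𝒜, ∀ A₂ ∈ 𝒜, ∀ A₃ ∈ 𝒜,
      ClDominates tl hd s (ClassOf tl hd s 𝒜 A₁) (ClassOf tl hd s 𝒜 A₂) →
      ClDominates tl hd s (ClassOf tl hd s 𝒜 A₂) (ClassOf tl hd s 𝒜 A₃) →
      ClDominates tl hd s (ClassOf tl hd s 𝒜 A₁) (ClassOf tl hd s 𝒜 A₃)) := by
  refine ⟨fun A _ h => h.1 rfl, fun A₁ hA₁ A₂ hA₂ A₃ hA₃ h₁₂ h₂₃ => ⟨?_, ?_⟩⟩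
  · intro hcl
    have h₃₁ : EquivSets tl hd s A₃ A₁ := (hcl ▸ mem_classOf_self hA₁ :
      A₁ ∈ ClassOf tl hd s 𝒜 A₃).2
    have hlt := (h₁₂.mincut_lt hA₁ hA₂).trans (h₂₃.mincut_lt hA₂ hA₃)
    exact hlt.ne h₃₁.mincut_eq.symm
  · obtain ⟨-, B, hBmin, hBsep⟩ := h₁₂
    obtain ⟨-, C, hCmin, hCsep⟩ := h₂₃
    obtain ⟨M, hBM, hCM, hcard⟩ := (hBmin A₂ (mem_classOf_self hA₂)).exists_separates_card_le
      (hCsep A₂ (mem_classOf_self hA₂))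
    exact ⟨M, fun X hX => (hCmin X hX).of_separates hCM hcard,
      fun X hX => (hBsep X hX).trans hBM⟩

/-- the domination relation `≺` amongst equivalence classes of
regular wiretap sets is a strict partial order: irreflexive and transitive. -/
theorem clDominates_strictPartialOrder {V E : Type*} [Fintype E]
    (tl hd : E → V) (s : V)
    (hacy : Acyclic tl hd) (hsrc : ∀ e : E, hd e ≠ s)
    (𝒜 : Finset (Finset E)) (hreg : ∀ A ∈ 𝒜, Regular tl hd s A) :
    (∀ A ∈ 𝒜, ¬ ClDominates tl hd s (ClassOf tl hd s 𝒜 A) (ClassOf tl hd s 𝒜 A)) ∧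
    (∀ A₁ ∈ 𝒜, ∀ A₂ ∈ 𝒜, ∀ A₃ ∈ 𝒜,
      ClDominates tl hd s (ClassOf tl hd s 𝒜 A₁) (ClassOf tl hd s 𝒜 A₂) →
      ClDominates tl hd s (ClassOf tl hd s 𝒜 A₂) (ClassOf tl hd s 𝒜 A₃) →
      ClDominates tl hd s (ClassOf tl hd s 𝒜 A₁) (ClassOf tl hd s 𝒜 A₃)) :=
  clDominates_strictPartialOrder_general tl hd s 𝒜
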